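/- arXiv:2512.03551 — 2 statements merged into one kernel-verified Lean document; each statement's English description precedes it below -/
import Mathlib

section
/- Leakage bound for partial basis knowledge: let k and n be natural numbers with k + 2 ≤ n, and let w_1, …, w_k be linearly independent vectors in ℝ^n. Then the set of (k+1)-dimensional subspaces of ℝ^n containing all of w_1, …, w_k, that is {W : Submodule ℝ (Fin n → ℝ) | finrank ℝ W = k + 1 ∧ ∀ i, w_i ∈ W}, is uncountable. Hence an adversary knowing all but one vector of a basis of a secret (k+1)-dimensional subspace cannot identify the subspace. -/
open Module Submodule

lemma aux_finrank_sup_span_singleton {n : ℕ} (W : Submodule ℝ (Fin n → ℝ))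
    {x : Fin n → ℝ} (hx : x ∉ W) :
    finrank ℝ ↥(W ⊔ (ℝ ∙ x)) = finrank ℝ W + 1 := by
  have hx0 : x ≠ 0 := fun h => hx (h ▸ W.zero_mem)
  have hinf : W ⊓ (ℝ ∙ x) = ⊥ := by
    rw [eq_bot_iff]
    rintro y ⟨hyW, hyx⟩
    obtain ⟨c, rfl⟩ := mem_span_singleton.mp hyx
    rcases eq_or_ne c 0 with rfl | hc
    · simp
    · exact (hx ((W.smul_mem_iff hc).mp hyW)).elim
  have := Submodule.finrank_sup_add_finrank_inf_eq W (ℝ ∙ x)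
  rw [hinf, finrank_bot, finrank_span_singleton hx0] at this
  omega

/-- Leakage bound for partial basis knowledge: if `w 1, …, w k` are linearly
independent vectors in `ℝ^n` with `k + 2 ≤ n`, then the set of
`(k+1)`-dimensional subspaces of `ℝ^n` containing all the `w i` is
uncountable (stated as: the set is not countable). -/
theorem stmt_7 (k n : ℕ) (hkn : k + 2 ≤ n) (w : Fin k → (Fin n → ℝ))
    (hw : LinearIndependent ℝ w) :
    ¬ {W : Submodule ℝ (Fin n → ℝ) |
        Module.finrank ℝ W = k + 1 ∧ ∀ i, w i ∈ W}.Countable := by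
  set S := span ℝ (Set.range w) with hS
  have hfin : finrank ℝ (Fin n → ℝ) = n := by simp
  have hSk : finrank ℝ S = k := by
    rw [finrank_span_eq_card hw, Fintype.card_fin]
  -- pick v ∉ S
  have hexv : ∃ v, v ∉ S := by
    by_contra h
    push_neg at h
    have : S = ⊤ := eq_top_iff.mpr fun x _ => h x
    rw [this, finrank_top, hfin] at hSk
    omega
  obtain ⟨v, hv⟩ := hexv
  set S1 := S ⊔ (ℝ ∙ v) with hS1
  have hS1k : finrank ℝ S1 = k + 1 := by
    rw [hS1, aux_finrank_sup_span_singleton S hv, hSk]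
  have hexu : ∃ u, u ∉ S1 := by
    by_contra h
    push_neg at h
    have : S1 = ⊤ := eq_top_iff.mpr fun x _ => h x
    rw [this, finrank_top, hfin] at hS1k
    omega
  obtain ⟨u, hu⟩ := hexu
  -- the family of subspaces
  set f : ℝ → Submodule ℝ (Fin n → ℝ) := fun t => S ⊔ (ℝ ∙ (u + t • v)) with hf
  have hvS1 : v ∈ S1 := mem_sup_right (mem_span_singleton_self v)
  have hSS1 : S ≤ S1 := le_sup_left
  have hnot : ∀ t : ℝ, u + t • v ∉ S := fun t h =>
    hu (by simpa using S1.sub_mem (hSS1 h) (S1.smul_mem t hvS1))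
  have hrank : ∀ t : ℝ, finrank ℝ (f t) = k + 1 := fun t => by
    rw [hf, aux_finrank_sup_span_singleton S (hnot t), hSk]
  have hmemS : ∀ t : ℝ, ∀ i, w i ∈ f t := fun t i =>
    mem_sup_left (subset_span (Set.mem_range_self i))
  -- injectivity
  have hinj : Function.Injective f := by
    intro t s hts
    by_contra hne
    have h1 : u + t • v ∈ f s := hts ▸ mem_sup_right (mem_span_singleton_self _)
    have h2 : u + s • v ∈ f s := mem_sup_right (mem_span_singleton_self _)
    have hvfs : v ∈ f s := by
      have hsub : (t - s) • v ∈ f s := by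
        have := (f s).sub_mem h1 h2
        simpa [sub_smul] using this
      have hts0 : t - s ≠ 0 := sub_ne_zero.mpr hne
      exact ((f s).smul_mem_iff hts0).mp hsub
    have hufs : u ∈ f s := by
      have := (f s).sub_mem h2 ((f s).smul_mem s hvfs)
      simpa using this
    have hle : S1 ⊔ (ℝ ∙ u) ≤ f s := by
      rw [hS1]
      refine sup_le (sup_le le_sup_left ?_) ?_
      · rwa [span_singleton_le_iff_mem]
      · rwa [span_singleton_le_iff_mem]
    have hbig : finrank ℝ ↥(S1 ⊔ (ℝ ∙ u)) = k + 2 := by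
      rw [aux_finrank_sup_span_singleton S1 hu, hS1k]
    have := Submodule.finrank_mono hle
    rw [hbig, hrank s] at this
    omega
  intro hcount
  have : (f ⁻¹' {W : Submodule ℝ (Fin n → ℝ) |
      Module.finrank ℝ W = k + 1 ∧ ∀ i, w i ∈ W}).Countable :=
    hcount.preimage hinj
  have heq : f ⁻¹' {W : Submodule ℝ (Fin n → ℝ) |
      Module.finrank ℝ W = k + 1 ∧ ∀ i, w i ∈ W} = Set.univ := by
    ext t; simp [hrank t, hmemS t]
  rw [heq] at this
  exact Cardinal.not_countable_real this
end

section
/- Consistency of observed keys with any candidate secret (Sybil resistance, Proposition 1): let x_1, x_2 be distinct real numbers, let b_1, b_2 be nonzero real numbers, let v_1, …, v_n be vectors in ℝ^d, and let a be any nonzero real number. Then there exist a polynomial g ∈ ℝ[X] of degree at most 1 and vectors v'_1, …, v'_n in ℝ^d such that g(x_1) = a, and for every k, g(x_1) • v'_k = b_1 • v_k and g(x_2) • v'_k = b_2 • v_k. In other words, the two users' observed bases {b_1 • v_k} and {b_2 • v_k} are consistent with the assignment f(x_1) = a for every nonzero value a, so colluding users cannot isolate the group manager's secret polynomial or basis.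 -/
/-! Rescaling every `v k` by `b₁ / a` leaves the observed data unchanged as soon as the
secret polynomial is replaced by the line through `(x₁, a)` and `(x₂, a * b₂ / b₁)`. -/

open Polynomial

theorem Polynomial.exists_degree_le_one_eval_eq_eval_eq {K : Type*} [Field K] {x₁ x₂ : K}
    (hx : x₁ ≠ x₂) (y₁ y₂ : K) :
    ∃ g : K[X], g.degree ≤ 1 ∧ g.eval x₁ = y₁ ∧ g.eval x₂ = y₂ := by
  have hx' : x₂ - x₁ ≠ 0 := sub_ne_zero.mpr hx.symm
  refine ⟨C y₁ + C ((y₂ - y₁) / (x₂ - x₁)) * (X - C x₁), by compute_degree, by simp, ?_⟩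
  simp [div_mul_cancel₀ _ hx']

theorem stmt_9_general (d n : ℕ) (x₁ x₂ : ℝ) (hx : x₁ ≠ x₂) (b₁ b₂ : ℝ)
    (hb₁ : b₁ ≠ 0) (v : Fin n → EuclideanSpace ℝ (Fin d))
    (a : ℝ) (ha : a ≠ 0) :
    ∃ (g : Polynomial ℝ) (v' : Fin n → EuclideanSpace ℝ (Fin d)),
      g.degree ≤ 1 ∧ g.eval x₁ = a ∧
      ∀ k, g.eval x₁ • v' k = b₁ • v k ∧ g.eval x₂ • v' k = b₂ • v k := by
  obtain ⟨g, hdeg, hg₁, hg₂⟩ := exists_degree_le_one_eval_eq_eval_eq hx a (a * b₂ / b₁)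
  refine ⟨g, fun k => (b₁ / a) • v k, hdeg, hg₁, fun k => ⟨?_, ?_⟩⟩
  · rw [hg₁, smul_smul, mul_div_cancel₀ _ ha]
  · rw [hg₂, smul_smul]
    congr 1
    field_simp

/-- Sybil resistance (Proposition 1): the observed bases `b₁ • v k` and
`b₂ • v k` of two colluding users with distinct public keys `x₁ ≠ x₂` are
consistent with *any* nonzero candidate value `a` for `f(x₁)`: there is a
degree-≤1 polynomial `g` with `g(x₁) = a` and a family of vectors `v'` that
reproduce exactly the same observed secrets. -/
theorem stmt_9 (d n : ℕ) (x₁ x₂ : ℝ) (hx : x₁ ≠ x₂) (b₁ b₂ : ℝ)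
    (hb₁ : b₁ ≠ 0) (hb₂ : b₂ ≠ 0) (v : Fin n → EuclideanSpace ℝ (Fin d))
    (a : ℝ) (ha : a ≠ 0) :
    ∃ (g : Polynomial ℝ) (v' : Fin n → EuclideanSpace ℝ (Fin d)),
      g.degree ≤ 1 ∧ g.eval x₁ = a ∧
      ∀ k, g.eval x₁ • v' k = b₁ • v k ∧ g.eval x₂ • v' k = b₂ • v k :=
  stmt_9_general d n x₁ x₂ hx b₁ b₂ hb₁ v a ha
end
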